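/- The rank of the es-splitting matroid M_X^e equals the rank of M plus one: r'(M_X^e) = r(M) + 1. -/

import Mathlib

open Set

namespace ESSplit

variable {α : Type*}

/-- A circuit of a matroid: a minimal dependent set. -/
def IsCircuit (M : Matroid α) (C : Set α) : Prop :=
  M.Dep C ∧ ∀ D, D ⊂ C → M.Indep D

/-- A binary matroid: one representable over GF(2). -/
def IsBinary (M : Matroid α) : Prop :=
  ∃ (n : ℕ) (φ : α → (Fin n → ZMod 2)),
    ∀ I, I ⊆ M.E → (M.Indep I ↔ LinearIndependent (ZMod 2) (fun x : I => φ x.1))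

/-- An OX-circuit: a circuit meeting `X` in an odd number of elements. -/
def IsOX (M : Matroid α) (X C : Set α) : Prop :=
  IsCircuit M C ∧ Odd (C ∩ X).ncard

/-- An EX-circuit: a circuit meeting `X` in an even number of elements. -/
def IsEX (M : Matroid α) (X C : Set α) : Prop :=
  IsCircuit M C ∧ Even (C ∩ X).ncard

/-- `D` is a union of two disjoint OX-circuits containing no EX-circuit. -/
def OXUnion (M : Matroid α) (X D : Set α) : Prop :=
  ∃ C₁ C₂, IsOX M X C₁ ∧ IsOX M X C₂ ∧ Disjoint C₁ C₂ ∧ D = C₁ ∪ C₂ ∧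
    ¬ ∃ C₀, IsEX M X C₀ ∧ C₀ ⊆ D

/-- The description of the circuits of the es-splitting matroid `M_X^e`. -/
def ESCircuit (M : Matroid α) (X : Set α) (e a γ : α) (C : Set α) : Prop :=
  C = {e, a, γ} ∨
  IsEX M X C ∨
  (OXUnion M X C ∧ ∀ D, OXUnion M X D → D ⊆ C → D = C) ∨
  (∃ C₀, IsOX M X C₀ ∧ C = C₀ ∪ {a}) ∨
  (∃ C₀, IsOX M X C₀ ∧ e ∉ C₀ ∧ C = C₀ ∪ {e, γ}) ∨
  (∃ C₀, IsOX M X C₀ ∧ e ∈ C₀ ∧ C = (C₀ \ {e}) ∪ {γ}) ∨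
  (∃ C₀, IsCircuit M C₀ ∧ e ∈ C₀ ∧ Odd (((C₀ \ {e}) ∩ X).ncard) ∧
      C = (C₀ \ {e}) ∪ {a, γ})

/-- `M'` is the es-splitting matroid `M_X^e` of `M` (with new elements `a`, `γ`):
it has ground set `M.E ∪ {a, γ}` and its circuits are exactly as described. -/
def IsESSplit (M M' : Matroid α) (X : Set α) (e a γ : α) : Prop :=
  M'.E = M.E ∪ {a, γ} ∧ ∀ C, IsCircuit M' C ↔ ESCircuit M X e a γ C

/-- The set `T(A)`. -/
def T (M : Matroid α) (X : Set α) (e : α) (A : Set α) : Set α :=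
  {x | x ∈ M.E \ A ∧ x ≠ e ∧ ∃ C, IsOX M X C ∧ x ∈ C ∧ e ∈ C ∧ C ⊆ A ∪ {e, x}}

/-- The set `F(A)`. -/
def F (M : Matroid α) (X A : Set α) : Set α :=
  {x | x ∈ M.closure A \ A ∧ ∃ C, IsOX M X C ∧ x ∈ C ∧ C ⊆ M.closure A}

/-- The rank of a set `A` in a (finite) matroid: the maximum size of an
independent subset of `A`. -/
noncomputable def rk (M : Matroid α) (A : Set α) : ℕ :=
  sSup {n | ∃ I, M.Indep I ∧ I ⊆ A ∧ I.ncard = n}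

end ESSplit

open ESSplit

/-! If `B` is a base of `M`, then `insert a B` is a base of `M_X^e`. It is independent because
every circuit of `M_X^e` either contains `γ` or contains a circuit of `M`. It spans because, by
the parity of `|C ∩ X|`, either `C` or `insert a C` is a circuit of `M_X^e` for every circuit `C`
of `M`; applied to fundamental circuits this spans `M.E`, and the triangle `{e, a, γ}` then
spans `γ`. -/

namespace ESSplit

variable {α : Type*} {M M' : Matroid α} {X B C : Set α} {e a γ : α}

lemma isCircuit_iff_isCircuit : IsCircuit M C ↔ M.IsCircuit C :=
  Matroid.isCircuit_iff_forall_ssubset.symm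

lemma rk_ground_eq_ncard_of_isBase [M.RankFinite] (hB : M.IsBase B) : rk M M.E = B.ncard := by
  have hle : ∀ n ∈ {n | ∃ I, M.Indep I ∧ I ⊆ M.E ∧ I.ncard = n}, n ≤ B.ncard := by
    rintro n ⟨I, hI, -, rfl⟩
    rw [ncard_def, ncard_def]
    exact ENat.toNat_le_toNat (hB.encard_eq_eRank ▸ hI.encard_le_eRank) hB.finite.encard_lt_top.ne
  have hmem : B.ncard ∈ {n | ∃ I, M.Indep I ∧ I ⊆ M.E ∧ I.ncard = n} :=
    ⟨B, hB.indep, hB.subset_ground, rfl⟩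
  exact le_antisymm (csSup_le ⟨_, hmem⟩ hle) (le_csSup ⟨_, hle⟩ hmem)

lemma ESCircuit.mem_or_exists_isCircuit_subset (h : ESCircuit M X e a γ C) :
    γ ∈ C ∨ ∃ C₀ ⊆ C, M.IsCircuit C₀ := by
  simp only [← isCircuit_iff_isCircuit]
  rcases h with rfl | h | ⟨⟨C₁, -, hC₁, -, -, rfl, -⟩, -⟩ | ⟨C₀, hC₀, rfl⟩ | ⟨C₀, -, -, rfl⟩ |
    ⟨C₀, -, -, rfl⟩ | ⟨C₀, -, -, -, rfl⟩
  · simp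
  · exact Or.inr ⟨C, subset_rfl, h.1⟩
  · exact Or.inr ⟨C₁, subset_union_left, hC₁.1⟩
  · exact Or.inr ⟨C₀, subset_union_left, hC₀.1⟩
  all_goals simp

namespace IsESSplit

lemma isCircuit_iff_esCircuit (hsplit : IsESSplit M M' X e a γ) :
    M'.IsCircuit C ↔ ESCircuit M X e a γ C := by
  rw [← isCircuit_iff_isCircuit, hsplit.2]

lemma insert_subset_ground (hsplit : IsESSplit M M' X e a γ) (hB : B ⊆ M.E) :
    insert a B ⊆ M'.E := by
  rw [hsplit.1]
  exact insert_subset (by simp) (hB.trans subset_union_left)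

lemma exists_isCircuit_subset_insert (hsplit : IsESSplit M M' X e a γ) (hC : M.IsCircuit C) :
    ∃ C', M'.IsCircuit C' ∧ C ⊆ C' ∧ C' ⊆ insert a C := by
  rw [← isCircuit_iff_isCircuit] at hC
  rcases Nat.even_or_odd (C ∩ X).ncard with hev | hodd
  · refine ⟨C, ?_, subset_rfl, subset_insert a C⟩
    rw [hsplit.isCircuit_iff_esCircuit]
    exact Or.inr (Or.inl ⟨hC, hev⟩)
  · refine ⟨insert a C, ?_, subset_insert a C, subset_rfl⟩
    rw [hsplit.isCircuit_iff_esCircuit, ← union_singleton]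
    exact Or.inr (Or.inr (Or.inr (Or.inl ⟨C, ⟨hC, hodd⟩, rfl⟩)))

lemma indep_insert_of_isBase (hsplit : IsESSplit M M' X e a γ) (haE : a ∉ M.E) (hγE : γ ∉ M.E)
    (haγ : a ≠ γ) (hB : M.IsBase B) : M'.Indep (insert a B) := by
  rw [Matroid.indep_iff_forall_subset_not_isCircuit (hsplit.insert_subset_ground hB.subset_ground)]
  intro C hCB hC
  rw [hsplit.isCircuit_iff_esCircuit] at hC
  rcases hC.mem_or_exists_isCircuit_subset with hγ | ⟨C₀, hC₀C, hC₀⟩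
  · rcases hCB hγ with rfl | hγB
    · exact haγ rfl
    · exact hγE (hB.subset_ground hγB)
  · have hC₀B : C₀ ⊆ B :=
      (subset_insert_iff_of_notMem fun ha ↦ haE (hC₀.subset_ground ha)).1 (hC₀C.trans hCB)
    exact hC₀.dep.not_indep (hB.indep.subset hC₀B)

lemma ground_subset_closure_insert (hsplit : IsESSplit M M' X e a γ) (hB : M.IsBase B) :
    M'.E ⊆ M'.closure (insert a B) := by
  have hground := hsplit.insert_subset_ground hB.subset_ground
  have hE : M.E ⊆ M'.closure (insert a B) := by
    intro x hx
    by_cases hxB : x ∈ B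
    · exact M'.subset_closure _ hground (mem_insert_of_mem a hxB)
    obtain ⟨C', hC', hCC', hC'a⟩ :=
      hsplit.exists_isCircuit_subset_insert (hB.fundCircuit_isCircuit hx hxB)
    refine M'.closure_subset_closure ?_
      (hC'.mem_closure_sdiff_singleton_of_mem (hCC' (M.mem_fundCircuit x B)))
    have := M.fundCircuit_subset_insert x B
    grind
  have hEa : M.E ∪ {a} ⊆ M'.closure (insert a B) :=
    union_subset hE (singleton_subset_iff.2 (M'.subset_closure _ hground (mem_insert a B)))
  have hΔ : M'.IsCircuit {e, a, γ} :=
    hsplit.isCircuit_iff_esCircuit.2 (Or.inl rfl)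
  have hγ : γ ∈ M'.closure (insert a B) := by
    refine M'.closure_subset_closure_of_subset_closure ?_
      (hΔ.mem_closure_sdiff_singleton_of_mem (by simp))
    refine subset_trans ?_ hEa
    have := hsplit.1 ▸ hΔ.subset_ground
    grind
  rw [hsplit.1]
  exact union_subset hE (insert_subset (hEa (by simp)) (singleton_subset_iff.2 hγ))

lemma insert_isBase_of_isBase (hsplit : IsESSplit M M' X e a γ) (haE : a ∉ M.E) (hγE : γ ∉ M.E)
    (haγ : a ≠ γ) (hB : M.IsBase B) : M'.IsBase (insert a B) :=
  (hsplit.indep_insert_of_isBase haE hγE haγ hB).isBase_of_ground_subset_closure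
    (hsplit.ground_subset_closure_insert hB)

end IsESSplit

end ESSplit

theorem rank_ground_es_splitting_general
    {α : Type*} (M M' : Matroid α) (X : Set α) (e a γ : α)
    (hfin : M.E.Finite)
    (haE : a ∉ M.E) (hγE : γ ∉ M.E) (haγ : a ≠ γ)
    (hsplit : IsESSplit M M' X e a γ) :
    rk M' M'.E = rk M M.E + 1 := by
  have : M.Finite := ⟨hfin⟩
  have : M'.Finite := ⟨hsplit.1 ▸ hfin.union (toFinite {a, γ})⟩
  obtain ⟨B, hB⟩ := M.exists_isBase
  rw [rk_ground_eq_ncard_of_isBase (hsplit.insert_isBase_of_isBase haE hγE haγ hB),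
    rk_ground_eq_ncard_of_isBase hB,
    ncard_insert_of_notMem (fun haB ↦ haE (hB.subset_ground haB)) hB.finite]

theorem rank_ground_es_splitting
    {α : Type*} (M M' : Matroid α) (X : Set α) (e a γ : α)
    (hfin : M.E.Finite) (hbin : IsBinary M)
    (hXE : X ⊆ M.E) (heX : e ∈ X) (haE : a ∉ M.E) (hγE : γ ∉ M.E) (haγ : a ≠ γ)
    (hsplit : IsESSplit M M' X e a γ) :
    rk M' M'.E = rk M M.E + 1 :=
  rank_ground_es_splitting_general M M' X e a γ hfin haE hγE haγ hsplit
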